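/- arXiv:0912.3186 — 11 statements merged into one kernel-verified Lean document; each statement's English description precedes it below -/
import Mathlib

section
/- Let ct(Γ) be defined for nonempty semigroup ideals Γ ⊆ ℤ≥0ⁿ as ct(Γ) = inf over weight vectors w ∈ ℤ≥0ⁿ, w ≠ 0, w not a standard basis vector, of (w₁ + ⋯ + wₙ − 1)/min_{m ∈ Γ}⟨w, m⟩ (fractions with zero denominator treated as +∞). Then the set of values {ct(Γ) : Γ a nonempty semigroup ideal of ℤ≥0ⁿ} ⊆ ℝ ∪ {+∞} satisfies the ascending chain condition: there is no strictly increasing infinite sequence of such values. -/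
open scoped ENNReal
open Filter

/-- A semigroup ideal of `(ℤ≥0)ⁿ`: a subset closed under adding arbitrary
nonnegative integer vectors. -/
def IsSemigroupIdeal {n : ℕ} (I : Set (Fin n → ℕ)) : Prop :=
  ∀ m ∈ I, ∀ v : Fin n → ℕ, m + v ∈ I

/-- A weight vector is admissible if it is nonzero and not a standard basis vector. -/
def AdmissibleWeight {n : ℕ} (w : Fin n → ℕ) : Prop :=
  w ≠ 0 ∧ ∀ i : Fin n, w ≠ Pi.single i 1

/-- The minimal weight of an element of `Γ` with respect to the weight vector `w`. -/
noncomputable def minWeight {n : ℕ} (Γ : Set (Fin n → ℕ)) (w : Fin n → ℕ) : ℕ :=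
  sInf {k : ℕ | ∃ m ∈ Γ, ∑ i, w i * m i = k}

/-- The (combinatorial) canonical threshold of a Newton diagram `Γ`, with values
in `ℝ≥0∞` (fractions with zero denominator are `+∞`). -/
noncomputable def ct {n : ℕ} (Γ : Set (Fin n → ℕ)) : ℝ≥0∞ :=
  ⨅ (w : Fin n → ℕ) (_ : AdmissibleWeight w),
    (((∑ i, w i) - 1 : ℕ) : ℝ≥0∞) / ((minWeight Γ w : ℕ) : ℝ≥0∞)

section PWO

lemma pwo_univ_pi : ∀ n : ℕ, (Set.univ : Set (Fin n → ℕ)).IsPWO := by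
  intro n
  induction n with
  | zero =>
    intro f
    exact ⟨0, 1, Nat.zero_lt_one, fun i => i.elim0⟩
  | succ d ih =>
    have hprod : ((Set.univ : Set ℕ) ×ˢ (Set.univ : Set (Fin d → ℕ))).IsPWO :=
      ((Set.isWF_univ_iff.2 (inferInstance : WellFoundedLT ℕ)).isPWO).prod ih
    have hmono : Monotone (fun p : ℕ × (Fin d → ℕ) => (Fin.cons p.1 p.2 : Fin (d+1) → ℕ)) := by
      intro p q hpq i
      refine Fin.cases ?_ ?_ i
      · simpa using hpq.1
      · intro j; simpa using hpq.2 j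
    have himg := hprod.image_of_monotone hmono
    have huniv : (fun p : ℕ × (Fin d → ℕ) => (Fin.cons p.1 p.2 : Fin (d+1) → ℕ)) ''
        ((Set.univ : Set ℕ) ×ˢ (Set.univ : Set (Fin d → ℕ))) = Set.univ := by
      refine Set.eq_univ_iff_forall.2 fun q => ?_
      exact ⟨(q 0, fun i => q i.succ), ⟨Set.mem_univ _, Set.mem_univ _⟩, Fin.cons_self_tail q⟩
    rwa [huniv] at himg

lemma dickson {n : ℕ} (Λ : Set (Fin n → ℕ)) :
    ∃ F : Finset (Fin n → ℕ), (↑F ⊆ Λ) ∧ ∀ m ∈ Λ, ∃ h ∈ F, h ≤ m := by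
  set M : Set (Fin n → ℕ) := {m | m ∈ Λ ∧ ∀ m' ∈ Λ, m' ≤ m → m' = m} with hM
  have hMfin : M.Finite := by
    by_contra hinf
    have hinf' : M.Infinite := hinf
    set e := hinf'.natEmbedding with he
    obtain ⟨i, j, hij, hle⟩ := pwo_univ_pi n (fun k => ⟨(e k : Fin n → ℕ), Set.mem_univ _⟩)
    have heq : (e i : Fin n → ℕ) = (e j : Fin n → ℕ) := (e j).2.2 (e i) (e i).2.1 hle
    exact absurd (e.injective (Subtype.ext heq)) (Nat.ne_of_lt hij)
  have hdom : ∀ N : ℕ, ∀ m ∈ Λ, (∑ i, m i) ≤ N → ∃ h ∈ M, h ≤ m := by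
    intro N
    induction N with
    | zero =>
      intro m hm hsum
      refine ⟨m, ⟨hm, fun m' hm' hle => ?_⟩, le_rfl⟩
      have hz : ∀ i, m i = 0 := by
        intro i
        have := Finset.single_le_sum (f := m) (fun j _ => Nat.zero_le _) (Finset.mem_univ i)
        omega
      funext i
      have h1 : m' i ≤ m i := Pi.le_def.1 hle i
      have h2 := hz i
      omega
    | succ N ihN =>
      intro m hm hsum
      by_cases hmin : ∀ m' ∈ Λ, m' ≤ m → m' = m
      · exact ⟨m, ⟨hm, hmin⟩, le_rfl⟩
      · push_neg at hmin
        obtain ⟨m', hm', hle, hne⟩ := hmin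
        have hlt : (∑ i, m' i) < ∑ i, m i := by
          refine Finset.sum_lt_sum (fun i _ => Pi.le_def.1 hle i) ?_
          by_contra hc
          push_neg at hc
          exact hne (funext fun i => le_antisymm (Pi.le_def.1 hle i) (hc i (Finset.mem_univ i)))
        obtain ⟨h, hhM, hh⟩ := ihN m' hm' (by omega)
        exact ⟨h, hhM, hh.trans hle⟩
  refine ⟨hMfin.toFinset, ?_, ?_⟩
  · intro x hx
    rw [Set.Finite.coe_toFinset] at hx
    exact hx.1
  · intro m hm
    obtain ⟨h, hhM, hh⟩ := hdom (∑ i, m i) m hm le_rfl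
    exact ⟨h, hMfin.mem_toFinset.2 hhM, hh⟩

end PWO

section Pigeon

lemma ultra_pigeon {β : Type*} (U : Ultrafilter ℕ) {A : Set ℕ} (hA : A ∈ U) (f : ℕ → β)
    (F : Finset β) (hf : ∀ k ∈ A, f k ∈ F) : ∃ b, {k | k ∈ A ∧ f k = b} ∈ U := by
  by_contra hc
  push_neg at hc
  have h1 : ∀ b, {k | k ∈ A ∧ f k = b}ᶜ ∈ U := fun b =>
    (Ultrafilter.compl_mem_iff_notMem).2 (hc b)
  have h2 : (⋂ b ∈ F, {k | k ∈ A ∧ f k = b}ᶜ) ∈ U :=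
    (Filter.biInter_finset_mem F).2 fun b _ => h1 b
  have h3 := Filter.inter_mem hA h2
  obtain ⟨k, hkA, hk2⟩ := Filter.nonempty_of_mem h3
  have := Set.mem_iInter₂.1 hk2 (f k) (hf k hkA)
  exact this ⟨hkA, rfl⟩

end Pigeon

section CTBasics

variable {n : ℕ}

lemma adm_two_le {w : Fin n → ℕ} (hw : AdmissibleWeight w) : 2 ≤ ∑ i, w i := by
  by_contra hc
  push_neg at hc
  rcases Nat.le_one_iff_eq_zero_or_eq_one.1 (Nat.lt_succ_iff.1 hc) with h | h
  · refine hw.1 (funext fun i => ?_)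
    have := (Finset.sum_eq_zero_iff).1 h i (Finset.mem_univ i)
    simpa using this
  · obtain ⟨i, hi⟩ : ∃ i, w i ≠ 0 := by
      by_contra hz
      push_neg at hz
      simp [hz] at h
    have hle : w i ≤ 1 := h ▸ Finset.single_le_sum (f := w)
      (fun j _ => Nat.zero_le _) (Finset.mem_univ i)
    have hwi : w i = 1 := by omega
    refine hw.2 i (funext fun j => ?_)
    by_cases hj : j = i
    · subst hj; simp [hwi]
    · have hsum := Finset.add_sum_erase Finset.univ w (Finset.mem_univ i)
      have hrest : ∑ j ∈ Finset.univ.erase i, w j = 0 := by omega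
      have hj0 : w j = 0 := (Finset.sum_eq_zero_iff).1 hrest j (by simp [hj])
      rw [hj0, Pi.single_eq_of_ne hj]

lemma minWeight_le {Γ : Set (Fin n → ℕ)} {w m : Fin n → ℕ} (hm : m ∈ Γ) :
    minWeight Γ w ≤ ∑ i, w i * m i :=
  Nat.sInf_le ⟨m, hm, rfl⟩

lemma exists_minWeight {Γ : Set (Fin n → ℕ)} (hne : Γ.Nonempty) (w : Fin n → ℕ) :
    ∃ m ∈ Γ, ∑ i, w i * m i = minWeight Γ w := by
  obtain ⟨m0, hm0⟩ := hne
  have hne' : {k : ℕ | ∃ m ∈ Γ, ∑ i, w i * m i = k}.Nonempty :=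
    ⟨∑ i, w i * m0 i, m0, hm0, rfl⟩
  exact Nat.sInf_mem hne'

lemma ct_le {Γ : Set (Fin n → ℕ)} {w : Fin n → ℕ} (hw : AdmissibleWeight w) :
    ct Γ ≤ (((∑ i, w i) - 1 : ℕ) : ℝ≥0∞) / ((minWeight Γ w : ℕ) : ℝ≥0∞) :=
  iInf₂_le w hw

end CTBasics

/-- The set of canonical thresholds of nonempty semigroup ideals of `(ℤ≥0)ⁿ`
satisfies the ascending chain condition. -/
theorem ct_values_ACC (n : ℕ) :
    ¬ ∃ Γ : ℕ → Set (Fin n → ℕ),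
      (∀ k, IsSemigroupIdeal (Γ k) ∧ (Γ k).Nonempty) ∧
      StrictMono fun k => ct (Γ k) := by
  classical
  rintro ⟨Γ, hΓ, hmono⟩
  have hmono' : StrictMono fun k => ct (Γ k) := hmono
  -- witnesses
  have hwit : ∀ k : ℕ, ∃ w : Fin n → ℕ, AdmissibleWeight w ∧
      (((∑ i, w i) - 1 : ℕ) : ℝ≥0∞) / ((minWeight (Γ k) w : ℕ) : ℝ≥0∞) < ct (Γ (k+1)) := by
    intro k
    have hk : ct (Γ k) < ct (Γ (k+1)) := hmono' (Nat.lt_succ_self k)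
    rw [ct, iInf_lt_iff] at hk
    obtain ⟨w, hw⟩ := hk
    rw [iInf_lt_iff] at hw
    obtain ⟨hadm, hlt⟩ := hw
    exact ⟨w, hadm, hlt⟩
  choose w hadm hwlt using hwit
  have ht1 : (0 : ℝ≥0∞) < ct (Γ 1) := lt_of_le_of_lt zero_le (hmono' Nat.zero_lt_one)
  obtain ⟨n₀, hn₀⟩ := ENNReal.exists_inv_nat_lt (ne_of_gt ht1)
  set U := Filter.hyperfilter ℕ with hUdef
  -- support pigeonhole
  obtain ⟨S, hS⟩ := ultra_pigeon U Filter.univ_mem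
    (fun k => Finset.univ.filter (fun i => w k i ≠ 0)) Finset.univ (fun _ _ => Finset.mem_univ _)
  -- cylinders
  set Λ : ℕ → Set (Fin n → ℕ) := fun k => {m | ∃ g ∈ Γ k, ∀ i ∈ S, g i ≤ m i} with hΛdef
  have hup : ∀ k (a b : Fin n → ℕ), a ∈ Λ k → a ≤ b → b ∈ Λ k := by
    rintro k a b ⟨g, hg, hga⟩ hab
    exact ⟨g, hg, fun i hi => (hga i hi).trans (Pi.le_def.1 hab i)⟩
  obtain ⟨F, hFsub, hFdom⟩ := dickson {m : Fin n → ℕ | {k | m ∈ Λ k} ∈ U}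
  have hFU : (⋂ h ∈ F, {k | h ∈ Λ k}) ∈ U :=
    (Filter.biInter_finset_mem F).2 fun h hh => hFsub hh
  obtain ⟨K₀, hK₀S, hK₀F⟩ := Filter.nonempty_of_mem (Filter.inter_mem hS hFU)
  have hSuppK₀ : Finset.univ.filter (fun i => w K₀ i ≠ 0) = S := hK₀S.2
  -- minimizers
  have hminx : ∀ k : ℕ, ∃ m ∈ Γ k, ∑ i, w K₀ i * m i = minWeight (Γ k) (w K₀) :=
    fun k => exists_minWeight (hΓ k).2 (w K₀)
  choose g hgΓ hgq using hminx
  have hnum1 : 1 ≤ (∑ i, w K₀ i) - 1 := by have := adm_two_le (hadm K₀); omega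
  have hnz : ((((∑ i, w K₀ i) - 1 : ℕ)) : ℝ≥0∞) ≠ 0 := by
    exact_mod_cast Nat.one_le_iff_ne_zero.1 hnum1
  have hnt : ((((∑ i, w K₀ i) - 1 : ℕ)) : ℝ≥0∞) ≠ ⊤ := ENNReal.natCast_ne_top _
  have hctle : ∀ k, ct (Γ k) ≤
      (((∑ i, w K₀ i) - 1 : ℕ) : ℝ≥0∞) / ((minWeight (Γ k) (w K₀) : ℕ) : ℝ≥0∞) :=
    fun k => ct_le (hadm K₀)
  -- uniform bound on the minimal weights
  have hqB : ∀ k, 1 ≤ k → minWeight (Γ k) (w K₀) ≤ ((∑ i, w K₀ i) - 1) * (n₀ + 1) := by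
    intro k hk1
    by_contra hc
    push_neg at hc
    have h1 : ct (Γ 1) ≤
        (((∑ i, w K₀ i) - 1 : ℕ) : ℝ≥0∞) / ((minWeight (Γ k) (w K₀) : ℕ) : ℝ≥0∞) :=
      le_trans (hmono'.monotone hk1) (hctle k)
    have h2 : (((∑ i, w K₀ i) - 1 : ℕ) : ℝ≥0∞) / ((minWeight (Γ k) (w K₀) : ℕ) : ℝ≥0∞) ≤
        (((∑ i, w K₀ i) - 1 : ℕ) : ℝ≥0∞) / ((((∑ i, w K₀ i) - 1) * (n₀ + 1) : ℕ) : ℝ≥0∞) := by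
      apply ENNReal.div_le_div_left
      exact_mod_cast Nat.le_of_lt hc
    have h3 : (((∑ i, w K₀ i) - 1 : ℕ) : ℝ≥0∞) / ((((∑ i, w K₀ i) - 1) * (n₀ + 1) : ℕ) : ℝ≥0∞)
        = (((n₀ + 1 : ℕ)) : ℝ≥0∞)⁻¹ := by
      rw [Nat.cast_mul, div_eq_mul_inv,
        ENNReal.mul_inv (Or.inl hnz) (Or.inl hnt), ← mul_assoc,
        ENNReal.mul_inv_cancel hnz hnt, one_mul]
    have h4 : (((n₀ + 1 : ℕ)) : ℝ≥0∞)⁻¹ ≤ ((n₀ : ℕ) : ℝ≥0∞)⁻¹ := by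
      apply ENNReal.inv_le_inv'
      exact_mod_cast Nat.le_succ n₀
    have : ct (Γ 1) < ct (Γ 1) :=
      lt_of_le_of_lt (le_trans (le_trans h1 h2) (le_trans (le_of_eq h3) h4)) hn₀
    exact absurd this (lt_irrefl _)
  -- truncated minimizers
  have hwzero : ∀ i, i ∉ S → w K₀ i = 0 := by
    intro i hi
    by_contra hz
    exact hi (hSuppK₀ ▸ Finset.mem_filter.2 ⟨Finset.mem_univ i, hz⟩)
  have hwpos : ∀ i ∈ S, 1 ≤ w K₀ i := by
    intro i hi
    rw [← hSuppK₀] at hi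
    have := (Finset.mem_filter.1 hi).2
    omega
  set p : ℕ → (Fin n → ℕ) := fun k i => if i ∈ S then g k i else 0 with hpdef
  have hpsum : ∀ k, ∑ i, w K₀ i * p k i = minWeight (Γ k) (w K₀) := by
    intro k
    rw [← hgq k]
    apply Finset.sum_congr rfl
    intro i _
    by_cases hi : i ∈ S
    · simp [hpdef, hi]
    · simp [hpdef, hi, hwzero i hi]
  have hpΛ : ∀ k, p k ∈ Λ k := fun k => ⟨g k, hgΓ k, fun i hi => by simp [hpdef, hi]⟩
  have hpbd : ∀ k, 1 ≤ k → ∀ i, p k i ≤ ((∑ i, w K₀ i) - 1) * (n₀ + 1) := by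
    intro k hk i
    by_cases hi : i ∈ S
    · have h1 : w K₀ i * p k i ≤ minWeight (Γ k) (w K₀) := by
        rw [← hpsum k]
        exact Finset.single_le_sum (f := fun i => w K₀ i * p k i)
          (fun j _ => Nat.zero_le _) (Finset.mem_univ i)
      have h2 := hwpos i hi
      have h3 := hqB k hk
      have h4 : p k i ≤ w K₀ i * p k i := Nat.le_mul_of_pos_left _ (by omega)
      omega
    · simp [hpdef, hi]
  -- pigeonhole on truncated minimizers
  have hA1 : {k : ℕ | 1 ≤ k} ∈ U := by
    have hfin : ({k : ℕ | 1 ≤ k}ᶜ).Finite := by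
      apply Set.Finite.subset (Set.finite_Iio 1)
      intro x hx
      simpa using hx
    have := Filter.compl_mem_hyperfilter_of_finite hfin
    rwa [compl_compl] at this
  obtain ⟨pb, hpb⟩ := ultra_pigeon U hA1 p
    (Finset.Icc 0 (fun _ => ((∑ i, w K₀ i) - 1) * (n₀ + 1))) (fun k hk => by
      rw [Finset.mem_Icc]
      exact ⟨fun i => Nat.zero_le _, fun i => hpbd k hk i⟩)
  have hpbL : pb ∈ {m : Fin n → ℕ | {k | m ∈ Λ k} ∈ U} := by
    refine Filter.mem_of_superset hpb ?_
    rintro k ⟨hk1, hkp⟩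
    exact hkp ▸ hpΛ k
  obtain ⟨h, hhF, hhle⟩ := hFdom pb hpbL
  have hhΛ : h ∈ Λ K₀ := Set.mem_iInter₂.1 hK₀F h hhF
  have hpbΛ : pb ∈ Λ K₀ := hup K₀ h pb hhΛ hhle
  obtain ⟨g', hg'Γ, hg'le⟩ := hpbΛ
  have hqK₀ : minWeight (Γ K₀) (w K₀) ≤ ∑ i, w K₀ i * pb i := by
    calc minWeight (Γ K₀) (w K₀) ≤ ∑ i, w K₀ i * g' i := minWeight_le hg'Γ
      _ ≤ ∑ i, w K₀ i * pb i := by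
          apply Finset.sum_le_sum
          intro i _
          by_cases hi : i ∈ S
          · exact Nat.mul_le_mul_left _ (hg'le i hi)
          · simp [hwzero i hi]
  -- pick a late index with the same truncated minimizer
  have htail : {k : ℕ | K₀ + 1 ≤ k} ∈ U := by
    have hfin : ({k : ℕ | K₀ + 1 ≤ k}ᶜ).Finite := by
      apply Set.Finite.subset (Set.finite_Iio (K₀ + 1))
      intro x hx
      simpa using hx
    have := Filter.compl_mem_hyperfilter_of_finite hfin
    rwa [compl_compl] at this
  obtain ⟨k₁, hk₁p, hk₁tail⟩ := Filter.nonempty_of_mem (Filter.inter_mem hpb htail)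
  have hqk₁ : minWeight (Γ k₁) (w K₀) = ∑ i, w K₀ i * pb i := by
    rw [← hpsum k₁, hk₁p.2]
  have hqle : minWeight (Γ K₀) (w K₀) ≤ minWeight (Γ k₁) (w K₀) := by
    rw [hqk₁]; exact hqK₀
  have hfinal : ct (Γ (K₀ + 1)) ≤
      (((∑ i, w K₀ i) - 1 : ℕ) : ℝ≥0∞) / ((minWeight (Γ K₀) (w K₀) : ℕ) : ℝ≥0∞) := by
    calc ct (Γ (K₀ + 1)) ≤ ct (Γ k₁) := hmono'.monotone hk₁tail
      _ ≤ (((∑ i, w K₀ i) - 1 : ℕ) : ℝ≥0∞) / ((minWeight (Γ k₁) (w K₀) : ℕ) : ℝ≥0∞) := hctle k₁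
      _ ≤ (((∑ i, w K₀ i) - 1 : ℕ) : ℝ≥0∞) / ((minWeight (Γ K₀) (w K₀) : ℕ) : ℝ≥0∞) := by
          apply ENNReal.div_le_div_left
          exact_mod_cast hqle
  exact absurd (lt_of_le_of_lt hfinal (hwlt K₀)) (lt_irrefl _)
end

section
/- Let 2 ≤ a ≤ b ≤ c be integers and define, for a weight vector w = (p,q,r) of positive integers with (p,q,r) ∉ {(1,0,0),(0,1,0),(0,0,1)}, the function h(w) = (p + q + r − 1)/min(ap, bq, cr). If (p,q,r) attains the minimum of h over all nonzero nonnegative integer vectors other than standard basis vectors, and the minimum is finite, then p ≥ q ≥ r. -/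
open scoped ENNReal

/-- The candidate canonical threshold of the Brieskorn singularity `x^a + y^b + z^c = 0`
at a nonnegative integer weight vector `w = (p, q, r)`, with values in `ℝ≥0∞`
(fractions with zero denominator are `+∞`). -/
noncomputable def brieskornHE (a b c : ℕ) (w : ℕ × ℕ × ℕ) : ℝ≥0∞ :=
  ((w.1 + w.2.1 + w.2.2 - 1 : ℕ) : ℝ≥0∞) /
    ((min (a * w.1) (min (b * w.2.1) (c * w.2.2)) : ℕ) : ℝ≥0∞)

/-- A weight vector is admissible if it is nonzero and not a standard basis vector. -/
def admissibleWeight (w : ℕ × ℕ × ℕ) : Prop :=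
  w ≠ (0, 0, 0) ∧ w ≠ (1, 0, 0) ∧ w ≠ (0, 1, 0) ∧ w ≠ (0, 0, 1)

lemma my_div_lt_div {N N' D D' : ℕ} (h1 : N' < N) (h2 : D ≤ D') (hD : D ≠ 0) :
    (N' : ℝ≥0∞) / D' < (N : ℝ≥0∞) / D := by
  calc (N' : ℝ≥0∞) / D' ≤ (N' : ℝ≥0∞) / D :=
        ENNReal.div_le_div_left (by exact_mod_cast h2) _
    _ < (N : ℝ≥0∞) / D := by
        rw [div_eq_mul_inv, div_eq_mul_inv]
        exact (ENNReal.mul_lt_mul_iff_left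
          (ENNReal.inv_ne_zero.mpr (ENNReal.natCast_ne_top D))
          (ENNReal.inv_ne_top.mpr (by exact_mod_cast hD))).mpr (by exact_mod_cast h1)

theorem brieskorn_min_weight_ordered (a b c : ℕ) (ha : 2 ≤ a) (hab : a ≤ b) (hbc : b ≤ c)
    (p q r : ℕ) (hadm : admissibleWeight (p, q, r))
    (hmin : IsLeast {x | ∃ w, admissibleWeight w ∧ x = brieskornHE a b c w}
      (brieskornHE a b c (p, q, r)))
    (hfin : brieskornHE a b c (p, q, r) ≠ ⊤) :
    r ≤ q ∧ q ≤ p := by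
  have hadm' : ¬(p = 0 ∧ q = 0 ∧ r = 0) ∧ ¬(p = 1 ∧ q = 0 ∧ r = 0)
      ∧ ¬(p = 0 ∧ q = 1 ∧ r = 0) ∧ ¬(p = 0 ∧ q = 0 ∧ r = 1) := by
    simpa [admissibleWeight, Prod.ext_iff] using hadm
  -- denominator is nonzero
  have hD : min (a * p) (min (b * q) (c * r)) ≠ 0 := by
    intro h0
    unfold brieskornHE at hfin
    simp only [h0, Nat.cast_zero] at hfin
    by_cases hN : p + q + r - 1 = 0
    · omega
    · exact hfin (ENNReal.div_zero (by exact_mod_cast hN))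
  have hp : 1 ≤ p ∧ 1 ≤ q ∧ 1 ≤ r := by
    rcases Nat.eq_zero_or_pos p with h | h
    · simp [h] at hD
    rcases Nat.eq_zero_or_pos q with h' | h'
    · simp [h'] at hD
    rcases Nat.eq_zero_or_pos r with h'' | h''
    · simp [h''] at hD
    exact ⟨h, h', h''⟩
  obtain ⟨hp1, hq1, hr1⟩ := hp
  have habp : a * p ≤ b * p := Nat.mul_le_mul_right p hab
  have hbcq : b * q ≤ c * q := Nat.mul_le_mul_right q hbc
  constructor
  · -- r ≤ q
    by_contra hcon
    push_neg at hcon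
    have hadmw : admissibleWeight (p, q, q) := by
      simp only [admissibleWeight, ne_eq, Prod.mk.injEq, not_and]
      omega
    have hle := hmin.2 ⟨(p, q, q), hadmw, rfl⟩
    have hlt : brieskornHE a b c (p, q, q) < brieskornHE a b c (p, q, r) := by
      simp only [brieskornHE]
      exact my_div_lt_div (by omega) (by omega) hD
    exact absurd hle (not_le.mpr hlt)
  · -- q ≤ p
    by_contra hcon
    push_neg at hcon
    have hadmw : admissibleWeight (p, p, r) := by
      simp only [admissibleWeight, ne_eq, Prod.mk.injEq, not_and]
      omega
    have hle := hmin.2 ⟨(p, p, r), hadmw, rfl⟩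
    have hlt : brieskornHE a b c (p, p, r) < brieskornHE a b c (p, q, r) := by
      simp only [brieskornHE]
      exact my_div_lt_div (by omega) (by omega) hD
    exact absurd hle (not_le.mpr hlt)
end

section
/- Let 2 ≤ a ≤ b ≤ c be integers. Then the minimum over all positive integer triples (p,q,r) of (p + q + r − 1)/min(ap, bq, cr) is at least 1/a + 1/b. -/
/-- The candidate canonical threshold of the Brieskorn singularity
`x^a + y^b + z^c = 0` computed at the weight vector `(p, q, r)`. -/
noncomputable def brieskornH (a b c p q r : ℕ) : ℝ :=
  ((p : ℝ) + q + r - 1) / min ((a : ℝ) * p) (min ((b : ℝ) * q) ((c : ℝ) * r))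

theorem brieskorn_ct_lower_bound (a b c : ℕ) (ha : 2 ≤ a) (hab : a ≤ b) (hbc : b ≤ c)
    (p q r : ℕ) (hp : 0 < p) (hq : 0 < q) (hr : 0 < r) :
    1 / (a : ℝ) + 1 / (b : ℝ) ≤ brieskornH a b c p q r := by
  have ha0 : (0:ℝ) < a := by exact_mod_cast Nat.lt_of_lt_of_le (by norm_num) ha
  have hb0 : (0:ℝ) < b := lt_of_lt_of_le ha0 (by exact_mod_cast hab)
  have hc0 : (0:ℝ) < c := lt_of_lt_of_le hb0 (by exact_mod_cast hbc)
  have hp0 : (0:ℝ) < p := by exact_mod_cast hp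
  have hq0 : (0:ℝ) < q := by exact_mod_cast hq
  have hr1 : (1:ℝ) ≤ r := by exact_mod_cast hr
  set m : ℝ := min ((a : ℝ) * p) (min ((b : ℝ) * q) ((c : ℝ) * r)) with hm
  have hm0 : 0 < m := lt_min (by positivity) (lt_min (by positivity) (by positivity))
  rw [brieskornH, le_div_iff₀ hm0]
  have h1 : m ≤ (a:ℝ) * p := min_le_left _ _
  have h2 : m ≤ (b:ℝ) * q := le_trans (min_le_right _ _) (min_le_left _ _)
  have hma : m / a ≤ p := by rw [div_le_iff₀ ha0]; linarith [h1]
  have hmb : m / b ≤ q := by rw [div_le_iff₀ hb0]; linarith [h2]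
  have : (1 / (a:ℝ) + 1 / b) * m = m / a + m / b := by ring
  rw [this]
  linarith
end

section
/- Let 2 ≤ a ≤ b ≤ c be integers with lcm(a,b) ≤ c. Then the minimum over all positive integer triples (p,q,r) of (p + q + r − 1)/min(ap, bq, cr) equals 1/a + 1/b. -/
/-- The set of values of `brieskornH a b c` over all positive integer weight triples. -/
def brieskornVals (a b c : ℕ) : Set ℝ :=
  {x | ∃ p q r : ℕ, 0 < p ∧ 0 < q ∧ 0 < r ∧ x = brieskornH a b c p q r}

theorem brieskorn_ct_eq_of_lcm_le (a b c : ℕ) (ha : 2 ≤ a) (hab : a ≤ b) (hbc : b ≤ c)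
    (hlcm : Nat.lcm a b ≤ c) :
    IsLeast (brieskornVals a b c) (1 / (a : ℝ) + 1 / (b : ℝ)) := by
  have ha0 : (0:ℝ) < a := by exact_mod_cast Nat.lt_of_lt_of_le Nat.zero_lt_two ha
  have hb0 : (0:ℝ) < b := by exact_mod_cast Nat.lt_of_lt_of_le (Nat.lt_of_lt_of_le Nat.zero_lt_two ha) hab
  constructor
  · -- membership
    have hmpos : 0 < Nat.lcm a b := Nat.lcm_pos (by omega) (by omega)
    set m := Nat.lcm a b with hm
    refine ⟨m / a, m / b, 1, ?_, ?_, one_pos, ?_⟩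
    · exact Nat.div_pos (Nat.le_of_dvd hmpos (Nat.dvd_lcm_left a b)) (by omega)
    · exact Nat.div_pos (Nat.le_of_dvd hmpos (Nat.dvd_lcm_right a b)) (by omega)
    · unfold brieskornH
      have hap : (a:ℝ) * ((m / a : ℕ) : ℝ) = (m : ℝ) := by
        rw [← Nat.cast_mul, Nat.mul_div_cancel' (Nat.dvd_lcm_left a b)]
      have hbq : (b:ℝ) * ((m / b : ℕ) : ℝ) = (m : ℝ) := by
        rw [← Nat.cast_mul, Nat.mul_div_cancel' (Nat.dvd_lcm_right a b)]
      rw [hap, hbq]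
      have hc : (m : ℝ) ≤ (c:ℝ) * ((1:ℕ):ℝ) := by
        push_cast
        simpa using (Nat.cast_le (α := ℝ)).mpr hlcm
      rw [min_eq_left hc, min_self]
      have hm0 : (m:ℝ) ≠ 0 := by positivity
      rw [eq_div_iff hm0]
      push_cast
      field_simp
      nlinarith [hap, hbq]
    -- end membership
  · rintro x ⟨p, q, r, hp, hq, hr, rfl⟩
    unfold brieskornH
    have hp' : (0:ℝ) < p := by exact_mod_cast hp
    have hq' : (0:ℝ) < q := by exact_mod_cast hq
    have hr' : (1:ℝ) ≤ r := by exact_mod_cast hr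
    have hc0 : (0:ℝ) < c := by exact_mod_cast (by omega : 0 < c)
    set M := min ((a:ℝ)*p) (min ((b:ℝ)*q) ((c:ℝ)*r)) with hM
    have hMpos : 0 < M :=
      lt_min (by positivity) (lt_min (by positivity) (by nlinarith))
    rw [le_div_iff₀ hMpos]
    have h1 : M ≤ (a:ℝ)*p := min_le_left _ _
    have h2 : M ≤ (b:ℝ)*q := le_trans (min_le_right _ _) (min_le_left _ _)
    have h1' : M / a ≤ p := by rw [div_le_iff₀ ha0]; linarith
    have h2' : M / b ≤ q := by rw [div_le_iff₀ hb0]; linarith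
    have : (1/(a:ℝ) + 1/b) * M = M/a + M/b := by ring
    linarith
end

section
/- The minimum over all positive integer triples (p,q,r) of (p + q + r − 1)/min(3p, 7q, 11r) equals 1/2, and it is attained at (p,q,r) = (2,1,1). -/
lemma brieskorn_key (p q r : ℕ) (hp : 0 < p) (hq : 0 < q) (hr : 0 < r) :
    min (3*p) (min (7*q) (11*r)) + 2 ≤ 2*(p+q+r) := by omega

lemma brieskornH_val : brieskornH 3 7 11 2 1 1 = (1/2 : ℝ) := by
  unfold brieskornH
  norm_num

theorem brieskorn_ct_example_3_7_11 :
    IsLeast (brieskornVals 3 7 11) (1/2 : ℝ) ∧ brieskornH 3 7 11 2 1 1 = (1/2 : ℝ) := by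
  refine ⟨⟨⟨2, 1, 1, by norm_num, by norm_num, by norm_num, brieskornH_val.symm⟩, ?_⟩,
    brieskornH_val⟩
  rintro x ⟨p, q, r, hp, hq, hr, rfl⟩
  unfold brieskornH
  push_cast
  have hp1 : (1:ℝ) ≤ p := by exact_mod_cast hp
  have hq1 : (1:ℝ) ≤ q := by exact_mod_cast hq
  have hr1 : (1:ℝ) ≤ r := by exact_mod_cast hr
  have hcast : (↑(min (3*p) (min (7*q) (11*r))) : ℝ)
      = min ((3:ℝ) * p) (min ((7:ℝ) * q) ((11:ℝ) * r)) := by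
    push_cast [Nat.cast_min]
    ring_nf
  have hkey : min ((3:ℝ) * p) (min ((7:ℝ) * q) ((11:ℝ) * r)) + 2 ≤ 2 * (p + q + r) := by
    rw [← hcast]
    exact_mod_cast brieskorn_key p q r hp hq hr
  have hpos : (0:ℝ) < min ((3:ℝ) * p) (min ((7:ℝ) * q) ((11:ℝ) * r)) := by
    simp only [lt_min_iff]
    refine ⟨by linarith, by linarith, by linarith⟩
  rw [le_div_iff₀ hpos]
  linarith
end

section
/- The minimum over all positive integer triples (p,q,r) of (p + q + r − 1)/min(5p, 6q, 29r) equals 3/8, and it is attained at (p,q,r) = (5,4,1). -/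
theorem brieskorn_ct_example_5_6_29 :
    IsLeast (brieskornVals 5 6 29) (3/8 : ℝ) ∧ brieskornH 5 6 29 5 4 1 = (3/8 : ℝ) := by
  have hval : brieskornH 5 6 29 5 4 1 = (3/8 : ℝ) := by
    unfold brieskornH; norm_num
  refine ⟨⟨⟨5, 4, 1, by norm_num, by norm_num, by norm_num, hval.symm⟩, ?_⟩, hval⟩
  rintro x ⟨p, q, r, hp, hq, hr, rfl⟩
  have hp' : (0:ℝ) < p := by exact_mod_cast hp
  have hq' : (0:ℝ) < q := by exact_mod_cast hq
  have hr' : (0:ℝ) < r := by exact_mod_cast hr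
  have key : 3 * min (5*p) (min (6*q) (29*r)) + 8 ≤ 8 * (p+q+r) := by
    rcases Nat.le_total (5*p) (min (6*q) (29*r)) with h | h
    · rw [min_eq_left h]; rw [le_min_iff] at h
      rcases le_or_gt p 6 with h3 | h3
      · interval_cases p <;> omega
      · omega
    · rw [min_eq_right h]
      rcases Nat.le_total (6*q) (29*r) with h2 | h2
      · rw [min_eq_left h2] at h ⊢; omega
      · rw [min_eq_right h2] at h ⊢
        rcases le_or_gt r 1 with h3 | h3
        · interval_cases r <;> omega
        · omega
  have keyR : (3:ℝ) * min ((5:ℝ)*p) (min ((6:ℝ)*q) ((29:ℝ)*r)) + 8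
      ≤ 8 * ((p:ℝ)+q+r) := by exact_mod_cast key
  have hD : (0:ℝ) < min ((5:ℝ)*p) (min ((6:ℝ)*q) ((29:ℝ)*r)) :=
    lt_min (by linarith) (lt_min (by linarith) (by linarith))
  unfold brieskornH
  push_cast
  rw [le_div_iff₀ hD]
  linarith
end

section
/- The minimum over all positive integer triples (p,q,r) of (p + q + r − 1)/min(12p, 18q, 35r) equals 1/7, and it is attained at (p,q,r) = (3,2,1). -/
theorem brieskorn_ct_example_12_18_35 :
    IsLeast (brieskornVals 12 18 35) (1/7 : ℝ) ∧ brieskornH 12 18 35 3 2 1 = (1/7 : ℝ) := by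
  have hval : brieskornH 12 18 35 3 2 1 = (1/7 : ℝ) := by
    unfold brieskornH
    norm_num
  refine ⟨⟨⟨3, 2, 1, by norm_num, by norm_num, by norm_num, hval.symm⟩, ?_⟩, hval⟩
  rintro x ⟨p, q, r, hp, hq, hr, rfl⟩
  unfold brieskornH
  have key : (min (12 * p) (min (18 * q) (35 * r)) : ℕ) ≤ 7 * (p + q + r - 1) := by
    omega
  have hD : (0 : ℝ) < min ((12 : ℝ) * p) (min ((18 : ℝ) * q) ((35 : ℝ) * r)) := by
    have h1 : (0 : ℝ) < (12 : ℝ) * p := by positivity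
    have h2 : (0 : ℝ) < (18 : ℝ) * q := by positivity
    have h3 : (0 : ℝ) < (35 : ℝ) * r := by positivity
    exact lt_min h1 (lt_min h2 h3)
  push_cast
  rw [le_div_iff₀ hD]
  have hcast : min ((12 : ℝ) * p) (min ((18 : ℝ) * q) ((35 : ℝ) * r))
      = ((min (12 * p) (min (18 * q) (35 * r)) : ℕ) : ℝ) := by
    push_cast
    ring_nf
  have hle : ((min (12 * p) (min (18 * q) (35 * r)) : ℕ) : ℝ)
      ≤ ((7 * (p + q + r - 1) : ℕ) : ℝ) := Nat.cast_le.mpr key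
  have hsum : ((7 * (p + q + r - 1) : ℕ) : ℝ) = 7 * ((p : ℝ) + q + r - 1) := by
    have : 1 ≤ p + q + r := by omega
    push_cast [Nat.cast_sub this]
    ring
  rw [hcast]
  rw [hsum] at hle
  linarith
end

section
/- The minimum over all positive integer triples (p,q,r) of (p + q + r − 1)/min(2p, 4q, 4r) equals 3/4. -/
theorem brieskorn_ct_2_4_4 : IsLeast (brieskornVals 2 4 4) (3 / 4 : ℝ) := by
  constructor
  · exact ⟨2, 1, 1, by norm_num, by norm_num, by norm_num, by norm_num [brieskornH]⟩
  · rintro x ⟨p, q, r, hp, hq, hr, rfl⟩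
    have hp1 : (1:ℝ) ≤ p := by exact_mod_cast hp
    have hq1 : (1:ℝ) ≤ q := by exact_mod_cast hq
    have hr1 : (1:ℝ) ≤ r := by exact_mod_cast hr
    unfold brieskornH
    push_cast
    have hm : (0:ℝ) < min ((2:ℝ)*p) (min ((4:ℝ)*q) ((4:ℝ)*r)) := by
      rw [lt_min_iff, lt_min_iff]
      refine ⟨by linarith, by linarith, by linarith⟩
    rw [le_div_iff₀ hm]
    rcases le_total ((2:ℝ)*p) (min ((4:ℝ)*q) ((4:ℝ)*r)) with h | h
    · rw [min_eq_left h]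
      have h1 : (2:ℝ)*p ≤ (4:ℝ)*q := le_trans h (min_le_left _ _)
      have h2 : (2:ℝ)*p ≤ (4:ℝ)*r := le_trans h (min_le_right _ _)
      linarith
    · rw [min_eq_right h]
      rcases le_total ((4:ℝ)*q) ((4:ℝ)*r) with h3 | h3
      · rw [min_eq_left h3] at h ⊢
        linarith
      · rw [min_eq_right h3] at h ⊢
        linarith
end

section
/- For every integer n ≥ 6, the minimum over all positive integer triples (p,q,r) of (p + q + r − 1)/min(2p, 3q, nr) equals 5/6. -/
theorem brieskorn_ct_2_3_n (n : ℕ) (hn : 6 ≤ n) :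
    IsLeast (brieskornVals 2 3 n) (5 / 6 : ℝ) := by
  have hn' : (6:ℝ) ≤ n := by exact_mod_cast hn
  constructor
  · refine ⟨3, 2, 1, by norm_num, by norm_num, by norm_num, ?_⟩
    unfold brieskornH
    push_cast
    have h1 : (2:ℝ) * 3 = 6 := by norm_num
    have h2 : (3:ℝ) * 2 = 6 := by norm_num
    rw [h1, h2, mul_one, min_eq_left (le_min le_rfl hn')]
    norm_num
  · rintro x ⟨p, q, r, hp, hq, hr, rfl⟩
    have hp' : (1:ℝ) ≤ p := by exact_mod_cast hp
    have hq' : (1:ℝ) ≤ q := by exact_mod_cast hq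
    have hr' : (1:ℝ) ≤ r := by exact_mod_cast hr
    unfold brieskornH
    push_cast
    set m := min ((2:ℝ)*p) (min ((3:ℝ)*q) ((n:ℝ)*r)) with hm
    have hm1 : m ≤ 2*p := min_le_left _ _
    have hm2 : m ≤ 3*q := le_trans (min_le_right _ _) (min_le_left _ _)
    have hmpos : 0 < m := by
      refine lt_min (by linarith) (lt_min (by linarith) ?_)
      nlinarith
    rw [le_div_iff₀ hmpos]
    linarith
end

section
/- Let p, q, r be positive integers with p ≥ q ≥ r ≥ 2, p > q + r − 1, and q ≤ 2r − 1. Choose the integer k ≥ 2 with (k−1)(q+r−1) < p ≤ k(q+r−1). Then the closed triangle in ℝ² with vertices O = (0,0), P' = (p − (k−1)(q+r−1), q+r−1), Q' = (p − (k−1)q + r − 1, q) contains the point (r, r). -/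
lemma mem_convexHull_triple {A B C x : ℝ × ℝ} {c1 c2 c3 : ℝ}
    (h1 : 0 ≤ c1) (h2 : 0 ≤ c2) (h3 : 0 ≤ c3) (hs : c1 + c2 + c3 = 1)
    (hx : x = c1 • A + c2 • B + c3 • C) :
    x ∈ convexHull ℝ ({A, B, C} : Set (ℝ × ℝ)) := by
  have hconv := convex_convexHull ℝ ({A, B, C} : Set (ℝ × ℝ))
  have hmem : ∀ i ∈ Finset.univ, (![A, B, C] : Fin 3 → ℝ × ℝ) i ∈
      convexHull ℝ ({A, B, C} : Set (ℝ × ℝ)) := by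
    intro i _
    apply subset_convexHull
    fin_cases i <;> simp
  have := hconv.sum_mem (t := Finset.univ) (w := ![c1, c2, c3])
    (z := ![A, B, C]) (by intro i _; fin_cases i <;> simpa)
    (by simpa [Fin.sum_univ_three] using hs) hmem
  simpa [Fin.sum_univ_three, hx] using this

set_option maxHeartbeats 1600000 in
theorem triangle_contains_rr (p q r k : ℕ)
    (hr : 2 ≤ r) (hqr : r ≤ q) (hpq : q ≤ p)
    (hp : q + r - 1 < p) (hq : q ≤ 2 * r - 1)
    (hk : 2 ≤ k)
    (hk1 : (k - 1) * (q + r - 1) < p) (hk2 : p ≤ k * (q + r - 1)) :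
    ((r : ℝ), (r : ℝ)) ∈ convexHull ℝ
      ({((0 : ℝ), (0 : ℝ)),
        ((p : ℝ) - ((k : ℝ) - 1) * ((q : ℝ) + r - 1), (q : ℝ) + r - 1),
        ((p : ℝ) - ((k : ℝ) - 1) * q + r - 1, (q : ℝ))} : Set (ℝ × ℝ)) := by
  -- integer versions of the hypotheses
  have h1k : 1 ≤ k := by omega
  have h1qr : 1 ≤ q + r := by omega
  zify [h1k, h1qr, show 1 ≤ 2*r by omega] at hk1 hk2 hp hq
  have hrz : (2 : ℤ) ≤ r := by exact_mod_cast hr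
  have hqrz : (r : ℤ) ≤ q := by exact_mod_cast hqr
  have hkz : (2 : ℤ) ≤ k := by exact_mod_cast hk
  have hkq : (k : ℤ) * q ≤ (p : ℤ) + r - 1 := by
    nlinarith [mul_nonneg (by linarith : (0:ℤ) ≤ (k:ℤ) - 2) (by linarith : (0:ℤ) ≤ (r:ℤ) - 1)]
  have hkr : (k : ℤ) * r ≤ (p : ℤ) + q - 1 := by
    nlinarith [mul_nonneg (by linarith : (0:ℤ) ≤ (k:ℤ) - 1) (by linarith : (0:ℤ) ≤ (q:ℤ) - r),
      mul_nonneg (by linarith : (0:ℤ) ≤ (k:ℤ) - 1) (by linarith : (0:ℤ) ≤ (r:ℤ) - 2)]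
  -- real versions
  have hR : (2 : ℝ) ≤ (r : ℝ) := by exact_mod_cast hr
  have hQR : (r : ℝ) ≤ (q : ℝ) := by exact_mod_cast hqr
  have hK : (2 : ℝ) ≤ (k : ℝ) := by exact_mod_cast hk
  have hk1' : ((k : ℝ) - 1) * ((q : ℝ) + r - 1) < p := by exact_mod_cast hk1
  have hk2' : (p : ℝ) ≤ k * ((q : ℝ) + r - 1) := by exact_mod_cast hk2
  have hkq' : (k : ℝ) * q ≤ (p : ℝ) + r - 1 := by exact_mod_cast hkq
  have hkr' : (k : ℝ) * r ≤ (p : ℝ) + q - 1 := by exact_mod_cast hkr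
  set P := (p : ℝ) with hP; set Q := (q : ℝ) with hQ
  set R := (r : ℝ) with hRR; set K := (k : ℝ) with hKK
  clear_value P Q R K
  clear hk1 hk2 hp hq hkq hkr hrz hqrz hkz hr hqr hpq hk h1k h1qr
  have hD : (0 : ℝ) < (R - 1) * (P + Q + R - 1) := by nlinarith
  have hDne : (R - 1) * (P + Q + R - 1) ≠ 0 := ne_of_gt hD
  refine mem_convexHull_triple
    (c1 := (R - 1) * (P + Q - 1 - K * R) / ((R - 1) * (P + Q + R - 1)))
    (c2 := R * (P + R - 1 - K * Q) / ((R - 1) * (P + Q + R - 1)))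
    (c3 := R * (K * (Q + R - 1) - P) / ((R - 1) * (P + Q + R - 1)))
    ?_ ?_ ?_ ?_ ?_
  · apply div_nonneg _ hD.le; nlinarith
  · apply div_nonneg _ hD.le; nlinarith
  · apply div_nonneg _ hD.le; nlinarith
  · field_simp [left_ne_zero_of_mul hDne, right_ne_zero_of_mul hDne]
    ring
  · simp only [Prod.smul_mk, Prod.mk_add_mk, smul_eq_mul, Prod.mk.injEq]
    constructor <;> · field_simp [left_ne_zero_of_mul hDne, right_ne_zero_of_mul hDne]; ring
end

section
/- Let p, q be positive odd integers with q ≥ 4 and r = 2, and suppose p > q + 1. Then the closed triangle in ℝ² with vertices O = (0,0), P = (p, q+1), Q = (p+1, q) contains a point with both coordinates positive even integers. Specifically, if p ≤ 2q − 1 the point (p−1, q−1) lies in the triangle, and if p > q + 1 with p ≥ (q+1)²/(q−1) the horizontal segment at height q − 1 inside the triangle has length at least 2 and hence contains an even lattice point. -/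
lemma combo3 {A B C : ℝ×ℝ} {a b c : ℝ} (ha : 0 ≤ a) (hb : 0 ≤ b) (hc : 0 ≤ c)
    (habc : a + b + c = 1) :
    a • A + b • B + c • C ∈ convexHull ℝ ({A, B, C} : Set (ℝ×ℝ)) := by
  have hA : A ∈ convexHull ℝ ({A,B,C} : Set (ℝ×ℝ)) := subset_convexHull _ _ (by simp)
  have hB : B ∈ convexHull ℝ ({A,B,C} : Set (ℝ×ℝ)) := subset_convexHull _ _ (by simp)
  have hC : C ∈ convexHull ℝ ({A,B,C} : Set (ℝ×ℝ)) := subset_convexHull _ _ (by simp)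
  have hconv := convex_convexHull ℝ ({A,B,C} : Set (ℝ×ℝ))
  rcases eq_or_lt_of_le (add_nonneg hb hc) with h0 | h0
  · have hb0 : b = 0 := by linarith
    have hc0 : c = 0 := by linarith
    have ha1 : a = 1 := by linarith
    simpa [hb0, hc0, ha1] using hA
  · set t := b + c with ht
    have htne : t ≠ 0 := ne_of_gt h0
    have hD : (b/t) • B + (c/t) • C ∈ convexHull ℝ ({A,B,C} : Set (ℝ×ℝ)) :=
      hconv hB hC (div_nonneg hb h0.le) (div_nonneg hc h0.le) (by field_simp; exact ht.symm)
    have := hconv hA hD ha h0.le (by linarith)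
    have heq : a • A + t • ((b/t) • B + (c/t) • C) = a • A + b • B + c • C := by
      rw [smul_add, smul_smul, smul_smul, mul_div_cancel₀ _ htne, mul_div_cancel₀ _ htne,
        add_assoc]
    rwa [heq] at this

lemma in_tri (p q x y : ℝ) (hpq : 0 < p + q + 1)
    (h1 : q * x ≤ (p + 1) * y) (h2 : p * y ≤ (q + 1) * x) (h3 : x + y ≤ p + q + 1) :
    (x, y) ∈ convexHull ℝ ({((0:ℝ),(0:ℝ)), ((p:ℝ), q + 1), (p + 1, q)} : Set (ℝ×ℝ)) := by
  have hne : p + q + 1 ≠ 0 := ne_of_gt hpq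
  have key := combo3 (A := ((0:ℝ),(0:ℝ))) (B := ((p:ℝ), q+1)) (C := (p+1, q))
    (a := (p + q + 1 - x - y)/(p+q+1)) (b := ((p+1)*y - q*x)/(p+q+1))
    (c := ((q+1)*x - p*y)/(p+q+1))
    (div_nonneg (by linarith) hpq.le)
    (div_nonneg (by linarith) hpq.le) (div_nonneg (by linarith) hpq.le)
    (by field_simp; ring)
  have heq : ((p + q + 1 - x - y)/(p+q+1)) • ((0:ℝ),(0:ℝ)) +
      (((p+1)*y - q*x)/(p+q+1)) • ((p:ℝ), q+1) +
      (((q+1)*x - p*y)/(p+q+1)) • ((p:ℝ)+1, q) = (x, y) := by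
    simp only [Prod.smul_mk, smul_eq_mul, Prod.mk_add_mk, Prod.mk.injEq]
    constructor <;> field_simp <;> ring
  rwa [heq] at key

theorem triangle_even_point_case_r_two (p q : ℕ)
    (hp : 0 < p) (hq : 4 ≤ q) (hpodd : Odd p) (hqodd : Odd q)
    (hpq : q + 1 < p) :
    (∃ m l : ℕ, 0 < m ∧ 0 < l ∧ Even m ∧ Even l ∧
      ((m : ℝ), (l : ℝ)) ∈ convexHull ℝ
        ({((0 : ℝ), (0 : ℝ)), ((p : ℝ), (q : ℝ) + 1), ((p : ℝ) + 1, (q : ℝ))} : Set (ℝ × ℝ))) ∧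
    (p ≤ 2 * q - 1 →
      ((p : ℝ) - 1, (q : ℝ) - 1) ∈ convexHull ℝ
        ({((0 : ℝ), (0 : ℝ)), ((p : ℝ), (q : ℝ) + 1), ((p : ℝ) + 1, (q : ℝ))} : Set (ℝ × ℝ))) ∧
    (((q : ℝ) + 1) ^ 2 / ((q : ℝ) - 1) ≤ (p : ℝ) →
      (∃ x₁ x₂ : ℝ, x₁ + 2 ≤ x₂ ∧
        (x₁, (q : ℝ) - 1) ∈ convexHull ℝ
          ({((0 : ℝ), (0 : ℝ)), ((p : ℝ), (q : ℝ) + 1), ((p : ℝ) + 1, (q : ℝ))} : Set (ℝ × ℝ)) ∧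
        (x₂, (q : ℝ) - 1) ∈ convexHull ℝ
          ({((0 : ℝ), (0 : ℝ)), ((p : ℝ), (q : ℝ) + 1), ((p : ℝ) + 1, (q : ℝ))} : Set (ℝ × ℝ))) ∧
      ∃ m : ℕ, 0 < m ∧ Even m ∧
        ((m : ℝ), (q : ℝ) - 1) ∈ convexHull ℝ
          ({((0 : ℝ), (0 : ℝ)), ((p : ℝ), (q : ℝ) + 1), ((p : ℝ) + 1, (q : ℝ))} : Set (ℝ × ℝ))) := by
  have hqR : (4:ℝ) ≤ (q:ℝ) := by exact_mod_cast hq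
  have hpR : (q:ℝ) + 2 ≤ (p:ℝ) := by exact_mod_cast hpq
  have hpqpos : (0:ℝ) < (p:ℝ) + (q:ℝ) + 1 := by linarith
  have hq1 : (0:ℝ) < (q:ℝ) - 1 := by linarith
  have hq0 : (0:ℝ) < (q:ℝ) := by linarith
  have hq2 : (0:ℝ) < (q:ℝ) + 1 := by linarith
  have hp0 : (0:ℝ) < (p:ℝ) := by linarith
  -- Part 2
  have part2 : p ≤ 2 * q - 1 →
      ((p : ℝ) - 1, (q : ℝ) - 1) ∈ convexHull ℝ
        ({((0 : ℝ), (0 : ℝ)), ((p : ℝ), (q : ℝ) + 1), ((p : ℝ) + 1, (q : ℝ))} : Set (ℝ × ℝ)) := by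
    intro h
    have h' : p + 1 ≤ 2 * q := by omega
    have h'' : (p:ℝ) + 1 ≤ 2 * (q:ℝ) := by exact_mod_cast h'
    exact in_tri p q ((p:ℝ)-1) ((q:ℝ)-1) hpqpos (by nlinarith) (by nlinarith) (by linarith)
  -- "large p" construction
  have bigcase : ((q:ℝ) + 1) ^ 2 ≤ ((q:ℝ) - 1) * (p:ℝ) →
      (∃ x₁ x₂ : ℝ, x₁ + 2 ≤ x₂ ∧
        (x₁, (q : ℝ) - 1) ∈ convexHull ℝ
          ({((0 : ℝ), (0 : ℝ)), ((p : ℝ), (q : ℝ) + 1), ((p : ℝ) + 1, (q : ℝ))} : Set (ℝ × ℝ)) ∧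
        (x₂, (q : ℝ) - 1) ∈ convexHull ℝ
          ({((0 : ℝ), (0 : ℝ)), ((p : ℝ), (q : ℝ) + 1), ((p : ℝ) + 1, (q : ℝ))} : Set (ℝ × ℝ))) ∧
      ∃ m : ℕ, 0 < m ∧ Even m ∧
        ((m : ℝ), (q : ℝ) - 1) ∈ convexHull ℝ
          ({((0 : ℝ), (0 : ℝ)), ((p : ℝ), (q : ℝ) + 1), ((p : ℝ) + 1, (q : ℝ))} : Set (ℝ × ℝ)) := by
    intro hP
    set x₁ : ℝ := (p:ℝ) * ((q:ℝ) - 1) / ((q:ℝ) + 1) with hx1def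
    set x₂ : ℝ := ((p:ℝ) + 1) * ((q:ℝ) - 1) / (q:ℝ) with hx2def
    have hx1pos : 0 < x₁ := div_pos (mul_pos hp0 hq1) hq2
    have hgap : x₁ + 2 ≤ x₂ := by
      rw [hx1def, hx2def, div_add' _ _ _ (ne_of_gt hq2), div_le_div_iff₀ hq2 hq0]
      nlinarith
    have hx1e : ((q:ℝ) + 1) * x₁ = (p:ℝ) * ((q:ℝ) - 1) := by
      rw [hx1def]; field_simp
    have hx2e : (q:ℝ) * x₂ = ((p:ℝ) + 1) * ((q:ℝ) - 1) := by
      rw [hx2def]; field_simp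
    have hx1le : x₁ ≤ (p:ℝ) := by
      rw [hx1def, div_le_iff₀ hq2]; nlinarith
    have hx2le : x₂ ≤ (p:ℝ) + 1 := by
      rw [hx2def, div_le_iff₀ hq0]; nlinarith
    have hmem1 : (x₁, (q:ℝ) - 1) ∈ convexHull ℝ
        ({((0 : ℝ), (0 : ℝ)), ((p : ℝ), (q : ℝ) + 1), ((p : ℝ) + 1, (q : ℝ))} : Set (ℝ × ℝ)) := by
      apply in_tri p q x₁ _ hpqpos
      · rw [hx1def, mul_div_assoc', div_le_iff₀ hq2]; nlinarith
      · rw [hx1e]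
      · linarith
    have hmem2 : (x₂, (q:ℝ) - 1) ∈ convexHull ℝ
        ({((0 : ℝ), (0 : ℝ)), ((p : ℝ), (q : ℝ) + 1), ((p : ℝ) + 1, (q : ℝ))} : Set (ℝ × ℝ)) := by
      apply in_tri p q x₂ _ hpqpos
      · calc (q:ℝ) * x₂ = ((p:ℝ) + 1) * ((q:ℝ) - 1) := hx2e
          _ ≤ ((p:ℝ) + 1) * ((q:ℝ) - 1) := le_refl _
      · nlinarith [hx1e, hgap, hx1pos]
      · linarith
    refine ⟨⟨x₁, x₂, hgap, hmem1, hmem2⟩, 2 * ⌈x₁ / 2⌉₊, by positivity, even_two_mul _, ?_⟩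
    have hk1 : x₁ ≤ (2 * ⌈x₁ / 2⌉₊ : ℕ) := by
      push_cast
      have := Nat.le_ceil (x₁ / 2)
      linarith
    have hk2 : ((2 * ⌈x₁ / 2⌉₊ : ℕ) : ℝ) ≤ x₁ + 2 := by
      push_cast
      have := Nat.ceil_lt_add_one (by positivity : (0:ℝ) ≤ x₁ / 2)
      linarith
    apply in_tri p q _ _ hpqpos
    · calc (q:ℝ) * (2 * ⌈x₁ / 2⌉₊ : ℕ) ≤ (q:ℝ) * x₂ := by
            apply mul_le_mul_of_nonneg_left (by linarith) hq0.le
        _ = ((p:ℝ) + 1) * ((q:ℝ) - 1) := hx2e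
    · calc (p:ℝ) * ((q:ℝ) - 1) = ((q:ℝ) + 1) * x₁ := hx1e.symm
        _ ≤ ((q:ℝ) + 1) * (2 * ⌈x₁ / 2⌉₊ : ℕ) := mul_le_mul_of_nonneg_left hk1 hq2.le
    · linarith
  refine ⟨?_, part2, fun hP => bigcase ((div_le_iff₀ hq1).mp hP |>.trans_eq (mul_comm _ _))⟩
  -- Part 1
  rcases le_or_gt p (2 * q - 1) with hsmall | hbig
  · refine ⟨p - 1, q - 1, by omega, by omega, Nat.Odd.sub_odd hpodd odd_one,
      Nat.Odd.sub_odd hqodd odd_one, ?_⟩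
    have e1 : ((p - 1 : ℕ) : ℝ) = (p:ℝ) - 1 := by
      rw [Nat.cast_sub hp, Nat.cast_one]
    have e2 : ((q - 1 : ℕ) : ℝ) = (q:ℝ) - 1 := by
      rw [Nat.cast_sub (by omega), Nat.cast_one]
    rw [e1, e2]
    exact part2 hsmall
  · have hp2q : 2 * q + 1 ≤ p := by
      obtain ⟨k, hk⟩ := hpodd; omega
    have hp2qR : 2 * (q:ℝ) + 1 ≤ (p:ℝ) := by exact_mod_cast hp2q
    have hP : ((q:ℝ) + 1) ^ 2 ≤ ((q:ℝ) - 1) * (p:ℝ) := by nlinarith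
    obtain ⟨-, m, hm0, hmeven, hmmem⟩ := bigcase hP
    refine ⟨m, q - 1, hm0, by omega, hmeven, Nat.Odd.sub_odd hqodd odd_one, ?_⟩
    have e2 : ((q - 1 : ℕ) : ℝ) = (q:ℝ) - 1 := by
      rw [Nat.cast_sub (by omega), Nat.cast_one]
    rw [e2]
    exact hmmem
end
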